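/- arXiv:1103.3811 — 2 statements merged into one kernel-verified Lean document; each statement's English description precedes it below -/
import Mathlib

section
/- Let U be a smooth bounded domain of ℝⁿ (n ≥ 3) and u ∈ C²(Ū). Then, with Δ := −div(∇), for every k ∈ {1,…,n}: ∫_U (∂_k u) Δu dx = ∫_{∂U} ( ν_k |∇u|²/2 − ∂_ν u ∂_k u ) dσ, where ν = (ν_1,…,ν_n) is the outward unit normal and dσ the surface measure on ∂U. -/
open scoped BigOperators ENNReal NNReal Topology RealInnerProductSpace
open MeasureTheory Filter Metric Set Asymptotics

noncomputable section

namespace LinNi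

/-- Euclidean `n`-space. -/
abbrev Euc (n : ℕ) := EuclideanSpace ℝ (Fin n)

/-- The `i`-th standard basis vector of `ℝⁿ`. -/
def ee (n : ℕ) (i : Fin n) : Euc n := EuclideanSpace.single i 1

/-- The Laplacian with the minus-sign convention `Δ := −div(∇)`. -/
def lap (n : ℕ) (u : Euc n → ℝ) (x : Euc n) : ℝ :=
  - ∑ i : Fin n, fderiv ℝ (fun y => fderiv ℝ u y (ee n i)) x (ee n i)

/-- The gradient within a set (the Riesz representative of `fderivWithin`). -/
def gradW (n : ℕ) (u : Euc n → ℝ) (s : Set (Euc n)) (x : Euc n) : Euc n :=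
  (InnerProductSpace.toDual ℝ (Euc n)).symm (fderivWithin ℝ u s x)

/-- Divergence of a vector field on `ℝⁿ`. -/
def divg (n : ℕ) (X : Euc n → Euc n) (x : Euc n) : ℝ :=
  ∑ i : Fin n, fderiv ℝ X x (ee n i) i

/-- A boundary-normal chart at a boundary point `x₀` of `Ω`: a smooth diffeomorphism `ψ`
from `B_δ(0)` onto an open neighbourhood of `x₀`, mapping `{x₁ < 0}` into `Ω` and
`{x₁ = 0}` into `∂Ω`, with `dψ₀` an orthogonal transformation. -/
def IsBoundaryNormalChart (n : ℕ) [NeZero n] (Ω : Set (Euc n)) (x₀ : Euc n)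
    (δ : ℝ) (ψ : Euc n → Euc n) : Prop :=
  0 < δ ∧ ContDiffOn ℝ (⊤ : ℕ∞) ψ (ball (0 : Euc n) δ) ∧
    Set.InjOn ψ (ball (0 : Euc n) δ) ∧ IsOpen (ψ '' ball (0 : Euc n) δ) ∧
    ψ 0 = x₀ ∧
    ψ '' (ball (0 : Euc n) δ ∩ {z : Euc n | z 0 < 0}) = ψ '' ball (0 : Euc n) δ ∩ Ω ∧
    ψ '' (ball (0 : Euc n) δ ∩ {z : Euc n | z 0 = 0}) =
      ψ '' ball (0 : Euc n) δ ∩ frontier Ω ∧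
    ∀ v : Euc n, ‖fderiv ℝ ψ 0 v‖ = ‖v‖

/-- A smooth bounded domain of `ℝⁿ`, together with its outward unit normal `ν`, the surface
measure `σb` on its boundary (pinned down by the divergence theorem), and the mean curvature
`H` of the boundary (computed in any boundary-normal chart, with the sign convention that the
boundary of the unit ball has positive mean curvature). -/
structure SmoothBoundedDomain (n : ℕ) [NeZero n] where
  Ω : Set (Euc n)
  isOpen : IsOpen Ω
  nonempty : Ω.Nonempty
  isBounded : Bornology.IsBounded Ω
  smoothBoundary : ∀ x₀ ∈ frontier Ω, ∃ δ ψ, IsBoundaryNormalChart n Ω x₀ δ ψ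
  ν : Euc n → Euc n
  ν_unit : ∀ x ∈ frontier Ω, ‖ν x‖ = 1
  ν_orth : ∀ x₀ ∈ frontier Ω, ∀ δ ψ, IsBoundaryNormalChart n Ω x₀ δ ψ →
    (∀ i : Fin n, i ≠ 0 → ⟪fderiv ℝ ψ 0 (ee n i), ν x₀⟫ = 0) ∧
      0 < ⟪fderiv ℝ ψ 0 (ee n 0), ν x₀⟫
  σb : Measure (Euc n)
  σb_boundary : σb (frontier Ω)ᶜ = 0
  divergence_thm : ∀ X : Euc n → Euc n, ContDiffOn ℝ 1 X (closure Ω) →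
    ∫ x in Ω, divg n X x = ∫ x in frontier Ω, ⟪X x, ν x⟫ ∂σb
  H : Euc n → ℝ
  H_eq : ∀ x₀ ∈ frontier Ω, ∀ δ ψ, IsBoundaryNormalChart n Ω x₀ δ ψ →
    H x₀ = - ∑ i : Fin n,
      (if i = 0 then 0 else ⟪iteratedFDeriv ℝ 2 ψ 0 ![ee n i, ee n i], ν x₀⟫)

/-- The critical Sobolev exponent `2* = 2n/(n−2)`. -/
def tstar (n : ℕ) : ℝ := 2 * n / ((n : ℝ) - 2)

/-- Average of `u` on `Ω`. -/
def avg {n : ℕ} [NeZero n] (D : SmoothBoundedDomain n) (u : Euc n → ℝ) : ℝ :=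
  (volume D.Ω).toReal⁻¹ * ∫ x in D.Ω, u x

/-- `u` is a (positive, `C²(Ω̄)`) solution of `Δu + εu = n(n−2)u^{2*−1}` in `Ω` with
Neumann boundary condition `∂_ν u = 0` on `∂Ω`. -/
def IsSolution {n : ℕ} [NeZero n] (D : SmoothBoundedDomain n) (ε : ℝ)
    (u : Euc n → ℝ) : Prop :=
  ContDiffOn ℝ 2 u (closure D.Ω) ∧ (∀ x ∈ D.Ω, 0 < u x) ∧
    (∀ x ∈ D.Ω, lap n u x + ε * u x = (n : ℝ) * ((n : ℝ) - 2) * u x ^ (tstar n - 1)) ∧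
    ∀ x ∈ frontier D.Ω, fderivWithin ℝ u (closure D.Ω) x (D.ν x) = 0

/-- The energy bound `∫_Ω u^{2*} ≤ Λ`. -/
def EnergyBound {n : ℕ} [NeZero n] (D : SmoothBoundedDomain n) (Λ : ℝ)
    (u : Euc n → ℝ) : Prop :=
  IntegrableOn (fun x => u x ^ tstar n) D.Ω volume ∧ (∫ x in D.Ω, u x ^ tstar n) ≤ Λ

/-- `x` is a singular point of the sequence `(u_α)`: it is not non-singular, i.e. there is no
uniform `L^∞` bound for the `u_α` on any neighbourhood of `x`. -/
def IsSingular {n : ℕ} [NeZero n] (D : SmoothBoundedDomain n) (u : ℕ → Euc n → ℝ)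
    (x : Euc n) : Prop :=
  ¬ ∃ δ > (0 : ℝ), ∃ C : ℝ, ∀ α : ℕ, ∀ y ∈ ball x δ ∩ D.Ω, |u α y| ≤ C

/-- The standard bubble of height `μ^{−(n−2)/2}` centred at `c`. -/
def bubble (n : ℕ) (μ : ℝ) (c : Euc n) (z : Euc n) : ℝ :=
  μ ^ (((n : ℝ) - 2) / 2) * (μ ^ 2 + ‖z - c‖ ^ 2) ^ ((1 : ℝ) - n / 2)

/-- The standard bubble `U₀(x) = (1+|x|²)^{1−n/2}`. -/
def stdBubble (n : ℕ) (z : Euc n) : ℝ := (1 + ‖z‖ ^ 2) ^ ((1 : ℝ) - n / 2)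

/-- `R_α(y) = min_i √(|x_{i,α} − y|² + μ_{i,α}²)`. -/
def Rmin (n N : ℕ) (x : Fin N → ℕ → Euc n) (μ : Fin N → ℕ → ℝ) (α : ℕ)
    (y : Euc n) : ℝ :=
  ⨅ i : Fin N, Real.sqrt (‖x i α - y‖ ^ 2 + μ i α ^ 2)

/-- Reflection `(x₁, x') ↦ (−x₁, x')`. -/
def reflNeg (n : ℕ) [NeZero n] (z : Euc n) : Euc n :=
  (WithLp.equiv 2 (Fin n → ℝ)).symm fun j => if j = 0 then -(z 0) else z j

/-- The folding map `π̃ : (x₁, x') ↦ (−|x₁|, x')` onto the lower half space. -/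
def reflAbs (n : ℕ) [NeZero n] (z : Euc n) : Euc n :=
  (WithLp.equiv 2 (Fin n → ℝ)).symm fun j => if j = 0 then -|z 0| else z j

/-- The weights are positive and nonincreasing in `i`. -/
def WeightsOrdered {N : ℕ} (μ : Fin N → ℕ → ℝ) : Prop :=
  (∀ i α, 0 < μ i α) ∧ ∀ (i j : Fin N) (α : ℕ), i ≤ j → μ j α ≤ μ i α

/-- Property (i) of the exhaustion: convergence of the points, vanishing of the weights, and
the interior/boundary dichotomy. -/
def ExhaustA {n : ℕ} [NeZero n] (D : SmoothBoundedDomain n) {N : ℕ}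
    (x : Fin N → ℕ → Euc n) (μ : Fin N → ℕ → ℝ) : Prop :=
  ∀ i : Fin N,
    (∃ xi ∈ closure D.Ω, Tendsto (fun α => x i α) atTop (𝓝 xi)) ∧
    Tendsto (μ i) atTop (𝓝 0) ∧
    (Tendsto (fun α => Metric.infDist (x i α) (frontier D.Ω) / μ i α) atTop atTop ∨
      ∀ α, x i α ∈ frontier D.Ω)

/-- Property (ii) of the exhaustion: separation of the bubbles. -/
def ExhaustB {n N : ℕ} (x : Fin N → ℕ → Euc n) (μ : Fin N → ℕ → ℝ) : Prop :=
  ∀ i j : Fin N, i < j →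
    Tendsto (fun α => ‖x i α - x j α‖ ^ 2 / (μ i α * μ j α) + μ i α / μ j α +
      μ j α / μ i α) atTop atTop

/-- The set `S_i` of finite rescaled limits of the other concentration points. -/
def limitSet {n N : ℕ} (x : Fin N → ℕ → Euc n) (μ : Fin N → ℕ → ℝ) (i : Fin N) :
    Set (Euc n) :=
  {θ | ∃ j : Fin N, i < j ∧
    Tendsto (fun α => (μ i α)⁻¹ • (x j α - x i α)) atTop (𝓝 θ)}

/-- `v` is `ε`-close in `C¹` to `w` on `K ∩ s` (derivatives of `v` taken within `s`). -/
def CloseC1On (n : ℕ) (v w : Euc n → ℝ) (s K : Set (Euc n)) (ε : ℝ) : Prop :=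
  ∀ z ∈ K ∩ s, |v z - w z| ≤ ε ∧ ‖fderivWithin ℝ v s z - fderiv ℝ w z‖ ≤ ε

/-- Property (iii) of the exhaustion: `C¹` convergence of the rescalings of `u_α`
(resp. of the reflected extension across the boundary in a boundary-normal chart)
to the standard bubble `U₀`, away from `S_i` (resp. `S_i` and its reflection). -/
def ExhaustC {n : ℕ} [NeZero n] (D : SmoothBoundedDomain n) {N : ℕ}
    (x : Fin N → ℕ → Euc n) (μ : Fin N → ℕ → ℝ) (u : ℕ → Euc n → ℝ) : Prop :=
  ∀ i : Fin N,
    (Tendsto (fun α => Metric.infDist (x i α) (frontier D.Ω) / μ i α) atTop atTop →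
      ∀ K : Set (Euc n), IsCompact K → Disjoint K (limitSet x μ i) →
        ∀ ε > (0 : ℝ), ∀ᶠ α in atTop,
          CloseC1On n (fun z => μ i α ^ (((n : ℝ) - 2) / 2) * u α (x i α + μ i α • z))
            (stdBubble n) {z | x i α + μ i α • z ∈ closure D.Ω} K ε) ∧
    ((∀ α, x i α ∈ frontier D.Ω) →
      ∃ x₀ ∈ frontier D.Ω, Tendsto (fun α => x i α) atTop (𝓝 x₀) ∧
        ∃ δ ψ, IsBoundaryNormalChart n D.Ω x₀ δ ψ ∧
          ∃ ζ : ℕ → Euc n,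
            (∀ᶠ α in atTop, ζ α ∈ ball (0 : Euc n) δ ∧ ζ α 0 = 0 ∧ ψ (ζ α) = x i α) ∧
            ∀ K : Set (Euc n), IsCompact K →
              Disjoint K (limitSet x μ i ∪ reflNeg n '' limitSet x μ i) →
              ∀ ε > (0 : ℝ), ∀ᶠ α in atTop,
                (∀ z ∈ K, ζ α + μ i α • reflAbs n z ∈ ball (0 : Euc n) δ →
                  |μ i α ^ (((n : ℝ) - 2) / 2) * u α (ψ (ζ α + μ i α • reflAbs n z)) -
                      stdBubble n z| ≤ ε) ∧
                CloseC1On n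
                  (fun z => μ i α ^ (((n : ℝ) - 2) / 2) * u α (ψ (ζ α + μ i α • z)))
                  (stdBubble n)
                  {z : Euc n | z 0 ≤ 0 ∧ ζ α + μ i α • z ∈ ball (0 : Euc n) δ} K ε)

/-- Property (iv) of the exhaustion: `R_α^{(n−2)/2}|u_α − Σ U_{i,α}| → 0` uniformly on `Ω̄`. -/
def ExhaustD {n : ℕ} [NeZero n] (D : SmoothBoundedDomain n) {N : ℕ}
    (x : Fin N → ℕ → Euc n) (μ : Fin N → ℕ → ℝ) (u : ℕ → Euc n → ℝ) : Prop :=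
  ∀ ε > (0 : ℝ), ∀ᶠ α in atTop, ∀ y ∈ closure D.Ω,
    Rmin n N x μ α y ^ (((n : ℝ) - 2) / 2) *
      |u α y - ∑ i : Fin N, bubble n (μ i α) (x i α) y| ≤ ε

/-- The blow-up setting: `(u_α)` solves the Lin–Ni equation with bounded energy, and
`(x_{i,α}, μ_{i,α})` satisfy properties (i)–(iv) of the exhaustion proposition. -/
def ExhaustedBlowup {n : ℕ} [NeZero n] (D : SmoothBoundedDomain n) (Λ : ℝ)
    (eps : ℕ → ℝ) (u : ℕ → Euc n → ℝ) {N : ℕ} (x : Fin N → ℕ → Euc n)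
    (μ : Fin N → ℕ → ℝ) : Prop :=
  (∀ α, 0 < eps α) ∧ Tendsto eps atTop (𝓝 0) ∧
    (∀ α, IsSolution D (eps α) (u α)) ∧ (∀ α, EnergyBound D Λ (u α)) ∧
    1 ≤ N ∧ WeightsOrdered μ ∧ (∀ i α, x i α ∈ closure D.Ω) ∧
    ExhaustA D x μ ∧ ExhaustB x μ ∧ ExhaustC D x μ u ∧ ExhaustD D x μ u

/-- `V` is the projected bubble associated to the bubble with weight `μ` and centre `c`:
the Neumann solution of `ΔV = n(n−2)(U^{2*−1} − avg(U^{2*−1}))`. -/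
def IsProjBubble {n : ℕ} [NeZero n] (D : SmoothBoundedDomain n) (μ : ℝ) (c : Euc n)
    (V : Euc n → ℝ) : Prop :=
  ContDiffOn ℝ 1 V (closure D.Ω) ∧ ContDiffOn ℝ 2 V D.Ω ∧
    (∀ y ∈ D.Ω, lap n V y =
      (n : ℝ) * ((n : ℝ) - 2) * bubble n μ c y ^ (tstar n - 1) -
        (n : ℝ) * ((n : ℝ) - 2) * (volume D.Ω).toReal⁻¹ *
          ∫ z in D.Ω, bubble n μ c z ^ (tstar n - 1)) ∧
    ∀ y ∈ frontier D.Ω, fderivWithin ℝ V (closure D.Ω) y (D.ν y) = 0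

/-- The family of projected bubbles, normalized so as to be comparable to the bubbles. -/
def ProjBubbles {n : ℕ} [NeZero n] (D : SmoothBoundedDomain n) {N : ℕ}
    (x : Fin N → ℕ → Euc n) (μ : Fin N → ℕ → ℝ) (V : Fin N → ℕ → Euc n → ℝ) : Prop :=
  (∀ i α, IsProjBubble D (μ i α) (x i α) (V i α)) ∧
    ∃ C > (0 : ℝ), ∀ i α, ∀ y ∈ closure D.Ω,
      C⁻¹ * bubble n (μ i α) (x i α) y ≤ V i α y ∧
        V i α y ≤ C * bubble n (μ i α) (x i α) y

/-- The sharp pointwise estimate `|u_α − ū_α − Σ V_{i,α}| ≤ β_α(ū_α + Σ U_{i,α})`, `β_α → 0`. -/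
def SharpEstimate {n : ℕ} [NeZero n] (D : SmoothBoundedDomain n) (u : ℕ → Euc n → ℝ)
    {N : ℕ} (x : Fin N → ℕ → Euc n) (μ : Fin N → ℕ → ℝ)
    (V : Fin N → ℕ → Euc n → ℝ) : Prop :=
  ∃ β : ℕ → ℝ, Tendsto β atTop (𝓝 0) ∧ ∀ α : ℕ, ∀ y ∈ closure D.Ω,
    |u α y - avg D (u α) - ∑ i : Fin N, V i α y| ≤
      β α * (avg D (u α) + ∑ i : Fin N, bubble n (μ i α) (x i α) y)

/-- `a_α ≍ b_α` : each is big-O of the other. -/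
def asympEquiv (a b : ℕ → ℝ) : Prop := a =O[atTop] b ∧ b =O[atTop] a

/-- The set `I` of indices whose concentration point is at distance `O(r_α)` from `x_α`
and whose weight is `o(r_α)`. -/
def nearIdx {n N : ℕ} (x : Fin N → ℕ → Euc n) (μ : Fin N → ℕ → ℝ)
    (xc : ℕ → Euc n) (r : ℕ → ℝ) : Set (Fin N) :=
  {i | (fun α => ‖x i α - xc α‖) =O[atTop] r ∧ μ i =o[atTop] r}

/-- `J_i = {j ≠ i : μ_{i,α} = O(μ_{j,α})}`. -/
def Jset {N : ℕ} (μ : Fin N → ℕ → ℝ) (i : Fin N) : Set (Fin N) :=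
  {j | j ≠ i ∧ μ i =O[atTop] μ j}

/-- The interaction radius `s_{i,α}`. -/
def sRad {n : ℕ} [NeZero n] (D : SmoothBoundedDomain n) {N : ℕ}
    (x : Fin N → ℕ → Euc n) (μ : Fin N → ℕ → ℝ) (u : ℕ → Euc n → ℝ) (i : Fin N)
    (α : ℕ) : ℝ :=
  sInf ({Real.sqrt (μ i α) / avg D (u α) ^ ((1 : ℝ) / ((n : ℝ) - 2))} ∪
    {t | ∃ j ∈ Jset μ i,
      t = Real.sqrt (μ i α / μ j α * (μ j α ^ 2 + ‖x j α - x i α‖ ^ 2))} ∪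
    {t | x i α ∉ frontier D.Ω ∧ t = Metric.infDist (x i α) (frontier D.Ω)})

/-- `v` is `ε`-close to `w` in `C²` on `K`. -/
def CloseC2On (n : ℕ) (v w : Euc n → ℝ) (K : Set (Euc n)) (ε : ℝ) : Prop :=
  ∀ z ∈ K, |v z - w z| ≤ ε ∧ ‖fderiv ℝ v z - fderiv ℝ w z‖ ≤ ε ∧
    ‖iteratedFDeriv ℝ 2 v z - iteratedFDeriv ℝ 2 w z‖ ≤ ε

/-- `v_α → w` in `C²_loc(ℝⁿ \ S)`. -/
def TendstoC2Loc (n : ℕ) (v : ℕ → Euc n → ℝ) (w : Euc n → ℝ) (S : Set (Euc n)) : Prop :=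
  ∀ K : Set (Euc n), IsCompact K → Disjoint K S →
    ∀ ε > (0 : ℝ), ∀ᶠ α in atTop, CloseC2On n (v α) w K ε

/-- `G` is a Green's function for the Neumann problem on `Ω`. -/
def IsNeumannGreenFn {n : ℕ} [NeZero n] (D : SmoothBoundedDomain n)
    (G : Euc n → Euc n → ℝ) : Prop :=
  ∀ x ∈ D.Ω, IntegrableOn (G x) D.Ω volume ∧ (∫ y in D.Ω, G x y) = 0 ∧
    ∀ φ : Euc n → ℝ, ContDiffOn ℝ 2 φ (closure D.Ω) →
      (∀ y ∈ frontier D.Ω, fderivWithin ℝ φ (closure D.Ω) y (D.ν y) = 0) →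
      φ x - avg D φ = ∫ y in D.Ω, G x y * lap n φ y

/-- `ω_{n−1}`, the surface area of the unit sphere of `ℝⁿ`. -/
def sphereArea (n : ℕ) : ℝ := n * (volume (ball (0 : Euc n) 1)).toReal

/-- `k_n = ((n−2)ω_{n−1})⁻¹`, the normalizing constant of the fundamental solution. -/
def kGreen (n : ℕ) : ℝ := 1 / (((n : ℝ) - 2) * sphereArea n)

/-- The embedding `ℝ^{n−1} ≃ {x₁ = 0} ⊆ ℝⁿ`. -/
def emb (n : ℕ) (y : EuclideanSpace ℝ (Fin (n - 1))) : Euc n :=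
  (WithLp.equiv 2 (Fin n → ℝ)).symm fun j =>
    if h : (j : ℕ) = 0 then 0 else y ⟨(j : ℕ) - 1, by have := j.isLt; omega⟩


lemma uniqueDiffOn_closure {n : ℕ} [NeZero n] (D : SmoothBoundedDomain n) :
    UniqueDiffOn ℝ (closure D.Ω) := by
  intro x hx
  by_cases hxΩ : x ∈ D.Ω
  · exact (D.isOpen.uniqueDiffWithinAt hxΩ).mono subset_closure
  · have hxf : x ∈ frontier D.Ω := by
      rw [frontier, D.isOpen.interior_eq]; exact ⟨hx, hxΩ⟩
    obtain ⟨δ, ψ, hδ, hψsm, hinj, hopen, hψ0, himΩ, himf, hiso⟩ := D.smoothBoundary x hxf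
    set s : Set (Euc n) := ball 0 δ ∩ {z : Euc n | z 0 < 0} with hs
    have hlin : IsLinearMap ℝ (fun z : Euc n => z 0) :=
      ⟨fun a b => rfl, fun c a => rfl⟩
    have hconv : Convex ℝ s := (convex_ball _ _).inter (convex_halfSpace_lt hlin 0)
    have hsopen : IsOpen s :=
      isOpen_ball.inter (isOpen_lt (EuclideanSpace.proj (0 : Fin n)).continuous continuous_const)
    set w : Euc n := (-(δ/2)) • ee n 0 with hw
    have hw0 : w 0 = -(δ/2) := by
      simp [hw, ee, EuclideanSpace.single_apply]
    have hwmem : w ∈ s := by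
      constructor
      · rw [mem_ball_zero_iff, hw, norm_smul, ee, EuclideanSpace.norm_single, norm_one,
          mul_one, Real.norm_eq_abs, abs_neg, abs_of_pos (by linarith : (0:ℝ) < δ/2)]
        linarith
      · simp only [mem_setOf_eq, hw0]; linarith
    have hint : (interior s).Nonempty := ⟨w, by rwa [hsopen.interior_eq]⟩
    have h0cl : (0 : Euc n) ∈ closure s := by
      have htend : Tendsto (fun t : ℝ => t • w) (𝓝[>] 0) (𝓝 (0 : Euc n)) := by
        have := ((continuous_id.smul (continuous_const (y := w))).tendsto (0:ℝ)).mono_left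
          (nhdsWithin_le_nhds (s := Set.Ioi (0:ℝ)))
        convert this using 2
        simp
        exact (zero_smul ℝ w).symm
      refine mem_closure_of_tendsto htend ?_
      filter_upwards [Ioo_mem_nhdsGT_of_mem (by constructor <;> norm_num : (0:ℝ) ∈ Set.Ico 0 1)]
        with t ht
      constructor
      · rw [mem_ball_zero_iff, norm_smul, hw, norm_smul, ee, EuclideanSpace.norm_single,
          norm_one, mul_one, Real.norm_eq_abs, Real.norm_eq_abs, abs_neg, abs_of_pos ht.1,
          abs_of_pos (by linarith : (0:ℝ) < δ/2)]
        nlinarith [ht.1, ht.2]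
      · have : (t • w) 0 = t * w 0 := rfl
        simp only [mem_setOf_eq, this, hw0]
        nlinarith [ht.1, ht.2]
    have hud0 : UniqueDiffWithinAt ℝ s 0 := uniqueDiffWithinAt_convex hconv hint h0cl
    have hball : ball (0 : Euc n) δ ∈ 𝓝 (0 : Euc n) :=
      isOpen_ball.mem_nhds (mem_ball_self hδ)
    have hdiff : HasFDerivAt ψ (fderiv ℝ ψ 0) 0 :=
      ((hψsm.contDiffAt hball).differentiableAt (by norm_num)).hasFDerivAt
    have hinjF : Function.Injective (fderiv ℝ ψ 0) := by
      intro a b hab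
      have : ‖fderiv ℝ ψ 0 (a - b)‖ = 0 := by rw [map_sub, hab, sub_self, norm_zero]
      rw [hiso] at this
      exact sub_eq_zero.1 (norm_eq_zero.1 this)
    have hdr : DenseRange (fderiv ℝ ψ 0) :=
      (LinearMap.surjective_of_injective (f := (fderiv ℝ ψ 0 : Euc n →ₗ[ℝ] Euc n)) hinjF).denseRange
    have himg : UniqueDiffWithinAt ℝ (ψ '' s) x := by
      have := hdiff.hasFDerivWithinAt.uniqueDiffWithinAt (s := s) hud0 hdr
      rwa [hψ0] at this
    refine himg.mono ?_
    rw [himΩ]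
    exact (inter_subset_right).trans subset_closure

/-- The Riesz map, coordinatewise, as a continuous linear map. -/
def tdc (n : ℕ) [NeZero n] : (Euc n →L[ℝ] ℝ) →L[ℝ] Euc n :=
  ∑ j : Fin n, (ContinuousLinearMap.apply ℝ ℝ (ee n j)).smulRight (ee n j)

lemma tdc_apply (n : ℕ) [NeZero n] (L : Euc n →L[ℝ] ℝ) :
    tdc n L = ∑ j : Fin n, L (ee n j) • ee n j := by
  rw [tdc]
  simp [ContinuousLinearMap.sum_apply]

lemma tdc_coord (n : ℕ) [NeZero n] (L : Euc n →L[ℝ] ℝ) (i : Fin n) :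
    tdc n L i = L (ee n i) := by
  have h := map_sum (EuclideanSpace.proj (𝕜 := ℝ) i) (fun j => L (ee n j) • ee n j) Finset.univ
  rw [tdc_apply, show (∑ j : Fin n, L (ee n j) • ee n j) i
      = (EuclideanSpace.proj (𝕜 := ℝ) i) (∑ j : Fin n, L (ee n j) • ee n j) from rfl, h]
  have h2 : ∀ j : Fin n, (EuclideanSpace.proj (𝕜 := ℝ) i) (L (ee n j) • ee n j)
      = L (ee n j) * (if i = j then 1 else 0) := by
    intro j
    rw [PiLp.proj_apply, PiLp.smul_apply, smul_eq_mul, ee, EuclideanSpace.single_apply]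
  simp only [h2, mul_ite, mul_one, mul_zero]
  simp
lemma tdc_grad (n : ℕ) [NeZero n] (u : Euc n → ℝ) (s : Set (Euc n)) (x : Euc n) :
    gradW n u s x = tdc n (fderivWithin ℝ u s x) := by
  apply PiLp.ext
  intro i
  rw [tdc_coord]
  have h1 : ⟪gradW n u s x, ee n i⟫ = fderivWithin ℝ u s x (ee n i) := by
    rw [gradW]; exact InnerProductSpace.toDual_symm_apply
  rw [← h1, ee]
  simp [EuclideanSpace.inner_single_right]

lemma tdc_inner (n : ℕ) [NeZero n] (L M : Euc n →L[ℝ] ℝ) :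
    ⟪tdc n L, tdc n M⟫ = ∑ j : Fin n, L (ee n j) * M (ee n j) := by
  rw [PiLp.inner_apply]
  simp [tdc_coord, RCLike.inner_apply]
  exact Finset.sum_congr rfl fun j _ => mul_comm _ _

lemma divg_interior {n : ℕ} [NeZero n] (u : Euc n → ℝ) (x : Euc n)
    (hu : ContDiffAt ℝ 2 u x) (k : Fin n) :
    divg n (fun y => ⟪tdc n (fderiv ℝ u y), tdc n (fderiv ℝ u y)⟫ • ((2:ℝ)⁻¹ • ee n k)
      - (fderiv ℝ u y (ee n k)) • tdc n (fderiv ℝ u y)) x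
      = fderiv ℝ u x (ee n k) * lap n u x := by
  set A := fderiv ℝ (fderiv ℝ u) x with hA
  have hAd : HasFDerivAt (fderiv ℝ u) A x :=
    ((hu.fderiv_right (m := 1) (by norm_num)).differentiableAt (by norm_num)).hasFDerivAt
  have hev : ∀ᶠ y in 𝓝 x, HasFDerivAt u (fderiv ℝ u y) y := by
    filter_upwards [hu.eventually (by norm_num)] with y hy
    exact (hy.differentiableAt (by norm_num)).hasFDerivAt
  have hsymm : ∀ v w, A v w = A w v := fun v w =>
    second_derivative_symmetric_of_eventually hev hAd v w
  have hgrad : HasFDerivAt (fun y => tdc n (fderiv ℝ u y)) ((tdc n).comp A) x :=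
    (tdc n).hasFDerivAt.comp x hAd
  have hsq := (HasFDerivAt.inner ℝ hgrad hgrad).smul_const ((2:ℝ)⁻¹ • ee n k)
  have hcoef : HasFDerivAt (fun y => fderiv ℝ u y (ee n k))
      ((ContinuousLinearMap.apply ℝ ℝ (ee n k)).comp A) x :=
    (ContinuousLinearMap.apply ℝ ℝ (ee n k)).hasFDerivAt.comp x hAd
  have hX := hsq.sub (hcoef.smul hgrad)
  have hlapi : ∀ i : Fin n,
      fderiv ℝ (fun y => fderiv ℝ u y (ee n i)) x
        = (ContinuousLinearMap.apply ℝ ℝ (ee n i)).comp A :=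
    fun i => ((ContinuousLinearMap.apply ℝ ℝ (ee n i)).hasFDerivAt.comp x hAd).fderiv
  have hlap : lap n u x = - ∑ i : Fin n, A (ee n i) (ee n i) := by
    rw [lap]
    congr 1
    refine Finset.sum_congr rfl fun i _ => ?_
    rw [hlapi i]
    simp
  rw [divg]
  have hXf : fderiv ℝ (fun y => ⟪tdc n (fderiv ℝ u y), tdc n (fderiv ℝ u y)⟫ • ((2:ℝ)⁻¹ • ee n k)
      - (fderiv ℝ u y (ee n k)) • tdc n (fderiv ℝ u y)) x = _ := hX.fderiv
  rw [hXf]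
  have hexp : ∀ i : Fin n,
      ((((fderivInnerCLM ℝ (tdc n (fderiv ℝ u x), tdc n (fderiv ℝ u x))).comp
          (((tdc n).comp A).prod ((tdc n).comp A))).smulRight ((2:ℝ)⁻¹ • ee n k) -
        (fderiv ℝ u x (ee n k) • (tdc n).comp A +
          (((ContinuousLinearMap.apply ℝ ℝ (ee n k)).comp A)).smulRight
            (tdc n (fderiv ℝ u x)))) (ee n i)) i
      = (∑ j : Fin n, fderiv ℝ u x (ee n j) * A (ee n i) (ee n j)) * (if i = k then 1 else 0)
          - (fderiv ℝ u x (ee n k) * A (ee n i) (ee n i)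
            + A (ee n i) (ee n k) * fderiv ℝ u x (ee n i)) := by
    intro i
    simp only [ContinuousLinearMap.sub_apply, ContinuousLinearMap.add_apply,
      ContinuousLinearMap.comp_apply, ContinuousLinearMap.smulRight_apply,
      ContinuousLinearMap.coe_smul', Pi.smul_apply, fderivInnerCLM_apply,
      ContinuousLinearMap.prod_apply, ContinuousLinearMap.apply_apply]
    rw [PiLp.sub_apply, PiLp.add_apply, PiLp.smul_apply, PiLp.smul_apply, PiLp.smul_apply,
      PiLp.smul_apply]
    rw [tdc_inner, tdc_inner, tdc_coord, tdc_coord]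
    have hek : ee n k i = if i = k then (1:ℝ) else 0 := by
      rw [ee]; exact EuclideanSpace.single_apply k 1 i
    rw [hek]
    simp only [smul_eq_mul]
    have hswap : ∑ j : Fin n, A (ee n i) (ee n j) * fderiv ℝ u x (ee n j)
        = ∑ j : Fin n, fderiv ℝ u x (ee n j) * A (ee n i) (ee n j) :=
      Finset.sum_congr rfl fun j _ => mul_comm _ _
    rw [hswap]
    by_cases h : i = k <;> simp [h] <;> ring
  rw [Finset.sum_congr rfl fun i _ => hexp i]
  rw [Finset.sum_sub_distrib, Finset.sum_add_distrib]
  simp only [mul_ite, mul_one, mul_zero, Finset.sum_ite_eq', Finset.mem_univ, if_true]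
  rw [← Finset.mul_sum]
  have h3 : ∑ i : Fin n, A (ee n i) (ee n k) * fderiv ℝ u x (ee n i)
      = ∑ i : Fin n, fderiv ℝ u x (ee n i) * A (ee n k) (ee n i) :=
    Finset.sum_congr rfl fun i _ => by rw [hsymm]; ring
  rw [h3, hlap]
  have h4 : ∑ j : Fin n, fderiv ℝ u x (ee n j) * A (ee n k) (ee n j)
      = ∑ i : Fin n, fderiv ℝ u x (ee n i) * A (ee n k) (ee n i) := rfl
  rw [h4]
  ring

/-- **The differentiated Pohozaev identity.** For `u ∈ C²(Ū)` and each `k`,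
`∫_U ∂_k u Δu = ∫_{∂U} (ν_k|∇u|²/2 − ∂_ν u ∂_k u) dσ`. -/
theorem pohozaev_identity_differentiated
    {n : ℕ} [NeZero n] (hn : 3 ≤ n) (U : SmoothBoundedDomain n)
    (u : Euc n → ℝ) (hu : ContDiffOn ℝ 2 u (closure U.Ω)) (k : Fin n) :
    ∫ x in U.Ω, fderiv ℝ u x (ee n k) * lap n u x =
      ∫ x in frontier U.Ω,
        (U.ν x k * (‖gradW n u (closure U.Ω) x‖ ^ 2 / 2) -
          fderivWithin ℝ u (closure U.Ω) x (U.ν x) *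
            fderivWithin ℝ u (closure U.Ω) x (ee n k)) ∂U.σb := by
  set s : Set (Euc n) := closure U.Ω with hs
  have hUD : UniqueDiffOn ℝ s := uniqueDiffOn_closure U
  set g : Euc n → Euc n →L[ℝ] ℝ := fun y => fderivWithin ℝ u s y with hgdef
  set X : Euc n → Euc n := fun y =>
    ⟪tdc n (g y), tdc n (g y)⟫ • ((2:ℝ)⁻¹ • ee n k) - (g y (ee n k)) • tdc n (g y) with hXdef
  have hg : ContDiffOn ℝ 1 g s := hu.fderivWithin hUD (by norm_num)
  have hgr : ContDiffOn ℝ 1 (fun y => tdc n (g y)) s :=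
    (tdc n).contDiff.comp_contDiffOn hg
  have hin : ContDiffOn ℝ 1 (fun y => ⟪tdc n (g y), tdc n (g y)⟫) s :=
    ContDiffOn.inner ℝ hgr hgr
  have hcoef : ContDiffOn ℝ 1 (fun y => g y (ee n k)) s := hg.clm_apply contDiffOn_const
  have hX : ContDiffOn ℝ 1 X s := (hin.smul contDiffOn_const).sub (hcoef.smul hgr)
  have hdiv := U.divergence_thm X hX
  have hgradW : ∀ y, gradW n u s y = tdc n (g y) := fun y => tdc_grad n u s y
  -- LHS
  have hL : ∫ x in U.Ω, divg n X x = ∫ x in U.Ω, fderiv ℝ u x (ee n k) * lap n u x := by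
    refine setIntegral_congr_fun U.isOpen.measurableSet fun x hx => ?_
    have hnx : s ∈ 𝓝 x := Filter.mem_of_superset (U.isOpen.mem_nhds hx) subset_closure
    have hcd : ContDiffAt ℝ 2 u x := hu.contDiffAt hnx
    have hXX' : X =ᶠ[𝓝 x] fun y =>
        ⟪tdc n (fderiv ℝ u y), tdc n (fderiv ℝ u y)⟫ • ((2:ℝ)⁻¹ • ee n k)
          - (fderiv ℝ u y (ee n k)) • tdc n (fderiv ℝ u y) := by
      filter_upwards [U.isOpen.mem_nhds hx] with y hy
      have : g y = fderiv ℝ u y :=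
        fderivWithin_of_mem_nhds (Filter.mem_of_superset (U.isOpen.mem_nhds hy) subset_closure)
      simp only [hXdef, this]
    have hfd := hXX'.fderiv_eq (𝕜 := ℝ)
    have : divg n X x = divg n (fun y =>
        ⟪tdc n (fderiv ℝ u y), tdc n (fderiv ℝ u y)⟫ • ((2:ℝ)⁻¹ • ee n k)
          - (fderiv ℝ u y (ee n k)) • tdc n (fderiv ℝ u y)) x := by
      rw [divg, divg, hfd]
    rw [this, divg_interior u x hcd k]
  -- RHS
  have hR : ∀ x, ⟪X x, U.ν x⟫ =
      U.ν x k * (‖gradW n u s x‖ ^ 2 / 2) -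
        fderivWithin ℝ u s x (U.ν x) * fderivWithin ℝ u s x (ee n k) := by
    intro x
    rw [hXdef]
    rw [inner_sub_left, real_inner_smul_left, real_inner_smul_left, real_inner_smul_left]
    rw [← hgradW]
    have h1 : ⟪gradW n u s x, gradW n u s x⟫ = ‖gradW n u s x‖ ^ 2 :=
      real_inner_self_eq_norm_sq _
    have h2 : ⟪gradW n u s x, U.ν x⟫ = fderivWithin ℝ u s x (U.ν x) := by
      rw [gradW]; exact InnerProductSpace.toDual_symm_apply
    have h3 : ⟪ee n k, U.ν x⟫ = U.ν x k := by
      rw [ee]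
      simp [EuclideanSpace.inner_single_left]
    rw [h1, h2, h3]
    ring
  rw [← hL, hdiv]
  exact integral_congr_ae (Filter.Eventually.of_forall fun x => hR x)
end LinNi
end
end

section
/- Let n ≥ 4, 2* := 2n/(n−2), and U₀(x) := (1+|x|²)^{1−n/2} for x ∈ ℝⁿ. Identify the hyperplane {x₁ = 0} ⊂ ℝⁿ with ℝ^{n−1}. Then ∫_{ℝ^{n−1}} |x|² ( |∇U₀(x)|²/2 − n(n−2) U₀(x)^{2*}/2* ) dx > 0 and ∫_{ℝ^{n−1}} ( |∇U₀(x)|²/2 − n(n−2) U₀(x)^{2*}/2* ) dx = 0, where ∇U₀ is the full gradient of U₀ on ℝⁿ restricted to the hyperplane and the integrals are with respect to (n−1)-dimensional Lebesgue measure. -/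
open scoped BigOperators ENNReal NNReal Topology RealInnerProductSpace
open MeasureTheory Filter Metric Set Asymptotics

noncomputable section

namespace LinNi

section Aux

-- integrability
lemma intOn {p q : ℝ} (hp : 0 < p) (hpq : p + 2*q < -1) :
    IntegrableOn (fun r : ℝ => r ^ p * (1 + r^2) ^ q) (Ioi (0:ℝ)) := by
  have hq : q < 0 := by nlinarith
  have hcont : Continuous (fun r : ℝ => r ^ p * (1 + r^2) ^ q) := by
    have hb : Continuous (fun r : ℝ => 1 + r^2) := by continuity
    have h1 : Continuous (fun r : ℝ => r ^ p) :=
      continuous_id.rpow_const (fun x => Or.inr hp.le)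
    have h2 : Continuous (fun r : ℝ => (1 + r^2) ^ q) :=
      hb.rpow_const (fun x => Or.inl (by positivity))
    exact h1.mul h2
  have h01 : IntegrableOn (fun r : ℝ => r ^ p * (1 + r^2) ^ q) (Ioc (0:ℝ) 1) :=
    (hcont.integrableOn_Icc (a := 0) (b := 1)).mono_set Ioc_subset_Icc_self
  have h1i : IntegrableOn (fun r : ℝ => r ^ p * (1 + r^2) ^ q) (Ioi (1:ℝ)) := by
    refine Integrable.mono' (integrableOn_Ioi_rpow_of_lt hpq zero_lt_one)
      (hcont.aestronglyMeasurable.restrict) ?_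
    filter_upwards [ae_restrict_mem measurableSet_Ioi] with r hr
    have hr1 : (1:ℝ) < r := hr
    have hr0 : (0:ℝ) < r := by linarith
    have h1 : (1 + r^2 : ℝ) ^ q ≤ (r^2 : ℝ) ^ q :=
      Real.rpow_le_rpow_of_nonpos (by positivity) (by linarith) hq.le
    have h2 : ((r^2 : ℝ)) ^ q = r ^ (2*q) := by
      rw [← Real.rpow_natCast r 2, ← Real.rpow_mul hr0.le]
      norm_num
    have h3 : r ^ p * (1 + r^2) ^ q ≤ r ^ (p + 2*q) := by
      calc r ^ p * (1 + r^2) ^ q ≤ r ^ p * (r^2) ^ q := by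
            apply mul_le_mul_of_nonneg_left h1 (Real.rpow_nonneg hr0.le p)
        _ = r ^ (p + 2*q) := by rw [h2, ← Real.rpow_add hr0]
    rw [Real.norm_eq_abs, abs_of_nonneg (by positivity)]
    exact h3
  have : Ioi (0:ℝ) = Ioc 0 1 ∪ Ioi 1 := (Ioc_union_Ioi_eq_Ioi zero_le_one).symm
  rw [this]
  exact h01.union h1i

lemma hasDerivRP {a b : ℝ} {r : ℝ} (hr : 0 < r) :
    HasDerivAt (fun r : ℝ => r ^ a * (1 + r^2) ^ b)
      (a * r^(a-1) * (1+r^2)^b + r^a * (2*r * (b * (1+r^2)^(b-1)))) r := by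
  have hb : (0:ℝ) < 1 + r^2 := by positivity
  have h1 : HasDerivAt (fun r : ℝ => r ^ a) (a * r^(a-1)) r :=
    Real.hasDerivAt_rpow_const (Or.inl hr.ne')
  have h2 : HasDerivAt (fun r : ℝ => 1 + r^2) (2*r) r := by
    simpa using (hasDerivAt_pow 2 r).const_add 1
  have h3 : HasDerivAt (fun r : ℝ => (1+r^2)^b) (2*r * (b * (1+r^2)^(b-1))) r := by
    have := h2.rpow_const (p := b) (Or.inl hb.ne')
    convert this using 1
    ring
  exact h1.mul h3

lemma tendstoRP {a b : ℝ} (ha : 0 < a) (hab : a + 2*b < 0) :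
    Tendsto (fun r : ℝ => r ^ a * (1 + r^2) ^ b) atTop (𝓝 0) := by
  have hb : b < 0 := by nlinarith
  apply squeeze_zero' (g := fun r : ℝ => r ^ (a + 2*b))
  · filter_upwards [eventually_gt_atTop (0:ℝ)] with r hr
    positivity
  · filter_upwards [eventually_ge_atTop (1:ℝ)] with r hr
    have hr0 : (0:ℝ) < r := by linarith
    have h1 : (1 + r^2 : ℝ) ^ b ≤ (r^2 : ℝ) ^ b :=
      Real.rpow_le_rpow_of_nonpos (by positivity) (by nlinarith) hb.le
    calc r ^ a * (1 + r^2) ^ b ≤ r ^ a * (r^2) ^ b :=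
          mul_le_mul_of_nonneg_left h1 (Real.rpow_nonneg hr0.le a)
      _ = r ^ (a + 2*b) := by
          rw [← Real.rpow_natCast r 2, ← Real.rpow_mul hr0.le, ← Real.rpow_add hr0]
          norm_num
  · exact tendsto_rpow_neg_atTop (by linarith : (0:ℝ) < -(a+2*b)) |>.congr
      (fun r => by rw [neg_neg])

lemma ftcRP {a b : ℝ} (ha : 1 < a) (hab : a + 2*b < 0) :
    IntegrableOn (fun r : ℝ =>
      a * r^(a-1) * (1+r^2)^b + r^a * (2*r * (b * (1+r^2)^(b-1)))) (Ioi (0:ℝ)) ∧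
    ∫ r in Ioi (0:ℝ),
      (a * r^(a-1) * (1+r^2)^b + r^a * (2*r * (b * (1+r^2)^(b-1)))) = 0 := by
  have hInt : IntegrableOn (fun r : ℝ =>
      a * r^(a-1) * (1+r^2)^b + r^a * (2*r * (b * (1+r^2)^(b-1)))) (Ioi (0:ℝ)) := by
    have i1 : IntegrableOn (fun r : ℝ => a * (r^(a-1) * (1+r^2)^b)) (Ioi (0:ℝ)) :=
      (intOn (by linarith) (by linarith)).const_mul a
    have i2 : IntegrableOn (fun r : ℝ => (2*b) * (r^(a+1) * (1+r^2)^(b-1))) (Ioi (0:ℝ)) :=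
      (intOn (by linarith) (by linarith)).const_mul (2*b)
    refine (i1.add i2).congr ?_
    filter_upwards [ae_restrict_mem measurableSet_Ioi] with r hr
    have hr0 : (0:ℝ) < r := hr
    have hra : r ^ (a+1) = r ^ a * r := Real.rpow_add_one hr0.ne' a
    show a * (r^(a-1) * (1+r^2)^b) + (2*b) * (r^(a+1) * (1+r^2)^(b-1)) = _
    rw [hra]; ring
  refine ⟨hInt, ?_⟩
  have h0 : (fun r : ℝ => r ^ a * (1 + r^2) ^ b) 0 = 0 := by
    simp [Real.zero_rpow (by linarith : a ≠ 0)]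
  have := integral_Ioi_of_hasDerivAt_of_tendsto (a := (0:ℝ))
    (f := fun r : ℝ => r ^ a * (1 + r^2) ^ b)
    (f' := fun r : ℝ => a * r^(a-1) * (1+r^2)^b + r^a * (2*r * (b * (1+r^2)^(b-1))))
    (m := 0) ?_ (fun x hx => hasDerivRP hx) hInt (tendstoRP (by linarith) hab)
  · rw [this, sub_eq_zero]; exact h0.symm
  · have h1 : Continuous (fun r : ℝ => r ^ a) :=
      continuous_id.rpow_const (fun x => Or.inr (by linarith))
    have h2 : Continuous (fun r : ℝ => (1 + r^2) ^ b) :=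
      (by continuity : Continuous (fun r : ℝ => 1 + r^2)).rpow_const
        (fun x => Or.inl (by positivity))
    exact (h1.mul h2).continuousWithinAt

lemma radZero {ν : ℝ} (hν : 4 ≤ ν) :
    ∫ r in Ioi (0:ℝ), r^(ν-2) * ((r^2-1) * (1+r^2)^(-ν)) = 0 := by
  obtain ⟨hI, h0⟩ := ftcRP (a := ν-1) (b := 1-ν) (by linarith) (by linarith)
  have key : EqOn (fun r : ℝ => r^(ν-2) * ((r^2-1) * (1+r^2)^(-ν)))
      (fun r : ℝ => (-(ν-1)⁻¹) * ((ν-1) * r^(ν-1-1) * (1+r^2)^(1-ν) +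
        r^(ν-1) * (2*r * ((1-ν) * (1+r^2)^(1-ν-1))))) (Ioi (0:ℝ)) := by
    intro r hr
    have hr0 : (0:ℝ) < r := hr
    have hb : (0:ℝ) < 1+r^2 := by positivity
    have e1 : ν-1-1 = ν-2 := by ring
    have e2 : (1:ℝ)-ν-1 = -ν := by ring
    have e3 : (1+r^2:ℝ)^((1:ℝ)-ν) = (1+r^2)^(-ν) * (1+r^2) := by
      rw [show (1:ℝ)-ν = -ν+1 by ring, Real.rpow_add_one hb.ne']
    have e4 : r^(ν-1) = r^(ν-2) * r := by
      rw [show ν-1 = (ν-2)+1 by ring, Real.rpow_add_one hr0.ne']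
    have e5 : r * r = r^(2:ℕ) := by ring
    have hν1 : ν-1 ≠ 0 := by linarith
    simp only [e1, e2, e3, e4]
    field_simp
    ring
  rw [setIntegral_congr_fun measurableSet_Ioi key, integral_const_mul, h0, mul_zero]

lemma radPos {ν : ℝ} (hν : 4 ≤ ν) :
    0 < ∫ r in Ioi (0:ℝ), r^(ν-2) * ((r^2:ℝ) * ((r^2-1) * (1+r^2)^(-ν))) := by
  obtain ⟨hID, hD0⟩ := ftcRP (a := ν+1) (b := 1-ν) (by linarith) (by linarith)
  have hIh : IntegrableOn (fun r : ℝ => r^ν * (1+r^2)^(-ν)) (Ioi (0:ℝ)) :=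
    intOn (by linarith) (by linarith)
  have key : EqOn (fun r : ℝ => r^(ν-2) * ((r^2:ℝ) * ((r^2-1) * (1+r^2)^(-ν))))
      (fun r : ℝ => (3-ν)⁻¹ * ((ν+1) * r^(ν+1-1) * (1+r^2)^(1-ν) +
        r^(ν+1) * (2*r * ((1-ν) * (1+r^2)^(1-ν-1)))) +
        (4/(ν-3)) * (r^ν * (1+r^2)^(-ν))) (Ioi (0:ℝ)) := by
    intro r hr
    have hr0 : (0:ℝ) < r := hr
    have hb : (0:ℝ) < 1+r^2 := by positivity
    have e1 : ν+1-1 = ν := by ring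
    have e2 : (1:ℝ)-ν-1 = -ν := by ring
    have e3 : (1+r^2:ℝ)^((1:ℝ)-ν) = (1+r^2)^(-ν) * (1+r^2) := by
      rw [show (1:ℝ)-ν = -ν+1 by ring, Real.rpow_add_one hb.ne']
    have e4 : r^(ν+1) = r^ν * r := Real.rpow_add_one hr0.ne' ν
    have e5 : r^(ν-2) * r^(2:ℕ) = r^ν := by
      rw [← Real.rpow_natCast r 2, ← Real.rpow_add hr0]; norm_num
    have hν3 : ν-3 ≠ 0 := by linarith
    have hν3' : (3:ℝ)-ν ≠ 0 := by linarith
    simp only [e1, e2, e3, e4]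
    have lhs_eq : r^(ν-2) * ((r^2:ℝ) * ((r^2-1) * (1+r^2)^(-ν)))
        = r^ν * ((r^2-1) * (1+r^2)^(-ν)) := by
      rw [← e5]; ring
    rw [lhs_eq]
    field_simp
    ring
  rw [setIntegral_congr_fun measurableSet_Ioi key]
  rw [integral_add (hID.const_mul _) (hIh.const_mul _), integral_const_mul,
    integral_const_mul, hD0, mul_zero, zero_add]
  have hsupp : Ioi (0:ℝ) ⊆ Function.support (fun r : ℝ => r^ν * (1+r^2)^(-ν)) ∩ Ioi 0 := by
    intro r hr
    have hr0 : (0:ℝ) < r := hr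
    have hpos : 0 < r^ν * (1+r^2)^(-ν) := by positivity
    exact ⟨Function.mem_support.2 hpos.ne', hr⟩
  have hnn : 0 ≤ᵐ[volume.restrict (Ioi (0:ℝ))] fun r : ℝ => r^ν * (1+r^2)^(-ν) := by
    filter_upwards [ae_restrict_mem measurableSet_Ioi] with r hr
    have hr0 : (0:ℝ) < r := hr
    positivity
  have hIpos : 0 < ∫ r in Ioi (0:ℝ), r^ν * (1+r^2)^(-ν) := by
    rw [setIntegral_pos_iff_support_of_nonneg_ae hnn hIh]
    refine lt_of_lt_of_le ?_ (measure_mono hsupp)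
    simp [Real.volume_Ioi]
  have h4 : 0 < 4/(ν-3) := by
    apply div_pos; norm_num; linarith
  exact mul_pos h4 hIpos

lemma emb_norm {n : ℕ} (hn : 1 ≤ n) (y : EuclideanSpace ℝ (Fin (n-1))) :
    ‖emb n y‖ = ‖y‖ := by
  obtain ⟨m, rfl⟩ : ∃ m, n = m + 1 := ⟨n - 1, by omega⟩
  rw [EuclideanSpace.norm_eq, EuclideanSpace.norm_eq]
  congr 1
  rw [Fin.sum_univ_succ]
  simp [emb, WithLp.equiv_symm_apply, Fin.val_succ]

lemma grad_stdBubble {n : ℕ} (hn : 4 ≤ n) (x : Euc n) :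
    gradient (stdBubble n) x
      = (((2:ℝ)-n) * (1+‖x‖^2)^(-(n:ℝ)/2)) • x := by
  have hb : (0:ℝ) < 1+‖x‖^2 := by positivity
  have h1 : HasFDerivAt (fun x : Euc n => ‖x‖^2) (2 • (innerSL ℝ x)) x := by
    simpa using (hasFDerivAt_id x).norm_sq
  have h2 : HasFDerivAt (fun x : Euc n => 1 + ‖x‖^2) (2 • innerSL ℝ x) x :=
    h1.const_add 1
  have h3 := h2.rpow_const (p := (1:ℝ) - n/2) (Or.inl hb.ne')
  have h4 : HasFDerivAt (stdBubble n)
      ((((1:ℝ) - n/2) * (1+‖x‖^2)^(((1:ℝ) - n/2) - 1)) • (2 • innerSL ℝ x)) x := h3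
  have h5 : ((((1:ℝ) - n/2) * (1+‖x‖^2)^(((1:ℝ) - n/2) - 1)) • (2 • innerSL ℝ x))
      = InnerProductSpace.toDual ℝ (Euc n) ((((2:ℝ)-n) * (1+‖x‖^2)^(-(n:ℝ)/2)) • x) := by
    ext z
    simp only [ContinuousLinearMap.smul_apply, innerSL_apply_apply,
      InnerProductSpace.toDual_apply_apply, real_inner_smul_left, smul_eq_mul]
    have : ((1:ℝ) - n/2) - 1 = -(n:ℝ)/2 := by ring
    rw [this]
    ring
  rw [h5] at h4
  have h6 := h4.hasGradientAt
  rw [LinearIsometryEquiv.symm_apply_apply] at h6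
  exact h6.gradient

lemma integrand_eq {n : ℕ} (hn : 4 ≤ n) (x : Euc n) :
    ‖gradient (stdBubble n) x‖^2/2 -
        (n:ℝ)*((n:ℝ)-2)*stdBubble n x ^ tstar n / tstar n
      = ((n:ℝ)-2)^2/2 * ((‖x‖^2 - 1) * (1+‖x‖^2)^(-(n:ℝ))) := by
  have hb : (0:ℝ) < 1+‖x‖^2 := by positivity
  have hn2 : (2:ℝ) < (n:ℝ) := by exact_mod_cast by omega
  have hn0 : (n:ℝ) ≠ 0 := by positivity
  have hgrad := grad_stdBubble hn x
  have hB2 : ((1+‖x‖^2) ^ (-(n:ℝ)/2))^2 = (1+‖x‖^2)^(-(n:ℝ)) := by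
    rw [← Real.rpow_natCast ((1+‖x‖^2) ^ (-(n:ℝ)/2)) 2, ← Real.rpow_mul hb.le]
    norm_num
  have hnorm : ‖gradient (stdBubble n) x‖^2
      = ((n:ℝ)-2)^2 * (1+‖x‖^2)^(-(n:ℝ)) * ‖x‖^2 := by
    rw [hgrad, norm_smul, mul_pow, Real.norm_eq_abs, sq_abs, mul_pow, hB2]
    ring
  have hne : ((n:ℝ)-2) ≠ 0 := by linarith
  have hexp : ((1:ℝ) - n/2) * tstar n = -(n:ℝ) := by
    rw [tstar]; field_simp; ring
  have hpow : stdBubble n x ^ tstar n = (1+‖x‖^2)^(-(n:ℝ)) := by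
    rw [stdBubble, ← Real.rpow_mul hb.le, hexp]
  have ht : tstar n ≠ 0 := by
    rw [tstar]
    have : (0:ℝ) < 2*n/((n:ℝ)-2) := div_pos (by positivity) (by linarith)
    exact this.ne'
  have hcoef : (n:ℝ)*((n:ℝ)-2)/tstar n = ((n:ℝ)-2)^2/2 := by
    rw [tstar]; field_simp
  rw [hnorm, hpow,
    show (n:ℝ)*((n:ℝ)-2)*(1+‖x‖^2)^(-(n:ℝ))/tstar n
      = ((n:ℝ)*((n:ℝ)-2)/tstar n) * (1+‖x‖^2)^(-(n:ℝ)) by ring, hcoef]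
  ring

end Aux

/-- **Sign of the boundary integrals of the standard bubble.** For `n ≥ 4`, identifying
`{x₁ = 0}` with `ℝ^{n−1}`,
`∫_{ℝ^{n−1}} |x|² (|∇U₀|²/2 − n(n−2)U₀^{2*}/2*) > 0` and
`∫_{ℝ^{n−1}} (|∇U₀|²/2 − n(n−2)U₀^{2*}/2*) = 0`. -/
theorem bubble_hyperplane_integrals
    {n : ℕ} (hn : 4 ≤ n) :
    (0 < ∫ y : EuclideanSpace ℝ (Fin (n - 1)),
      ‖emb n y‖ ^ 2 * (‖gradient (stdBubble n) (emb n y)‖ ^ 2 / 2 -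
        (n : ℝ) * ((n : ℝ) - 2) * stdBubble n (emb n y) ^ tstar n / tstar n)) ∧
    (∫ y : EuclideanSpace ℝ (Fin (n - 1)),
      (‖gradient (stdBubble n) (emb n y)‖ ^ 2 / 2 -
        (n : ℝ) * ((n : ℝ) - 2) * stdBubble n (emb n y) ^ tstar n / tstar n)) = 0 := by
  have hν : (4:ℝ) ≤ (n:ℝ) := by exact_mod_cast hn
  haveI : NeZero (n-1) := ⟨by omega⟩
  haveI : Nontrivial (EuclideanSpace ℝ (Fin (n-1))) := by
    refine ⟨EuclideanSpace.single ⟨0, by omega⟩ 1, 0, fun h => ?_⟩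
    have h2 : (EuclideanSpace.single (⟨0, by omega⟩ : Fin (n-1)) (1:ℝ)) ⟨0, by omega⟩ = (0 : EuclideanSpace ℝ (Fin (n-1))) ⟨0, by omega⟩ := by rw [h]
    rw [EuclideanSpace.single_apply] at h2
    simp only [if_pos rfl] at h2
    exact one_ne_zero h2
  set c : ℝ := ((n:ℝ)-2)^2/2 with hc
  have hcpos : 0 < c := by
    rw [hc]
    have : (0:ℝ) < ((n:ℝ)-2)^2 := by nlinarith
    linarith
  have hsub : n - 1 - 1 = n - 2 := by omega
  have hcast : ((n - 1 - 1 : ℕ) : ℝ) = (n:ℝ) - 2 := by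
    rw [hsub, Nat.cast_sub (by omega : 2 ≤ n)]
    norm_num
  set F₂ : ℝ → ℝ := fun r => c * ((r^2-1) * (1+r^2)^(-(n:ℝ))) with hF₂
  set F₁ : ℝ → ℝ := fun r => r^2 * (c * ((r^2-1) * (1+r^2)^(-(n:ℝ)))) with hF₁
  have key2 : (fun y : EuclideanSpace ℝ (Fin (n - 1)) =>
      (‖gradient (stdBubble n) (emb n y)‖ ^ 2 / 2 -
        (n : ℝ) * ((n : ℝ) - 2) * stdBubble n (emb n y) ^ tstar n / tstar n))
      = fun y => F₂ ‖y‖ := by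
    funext y
    rw [integrand_eq hn (emb n y), emb_norm (by omega) y]
  have key1 : (fun y : EuclideanSpace ℝ (Fin (n - 1)) =>
      ‖emb n y‖ ^ 2 * (‖gradient (stdBubble n) (emb n y)‖ ^ 2 / 2 -
        (n : ℝ) * ((n : ℝ) - 2) * stdBubble n (emb n y) ^ tstar n / tstar n))
      = fun y => F₁ ‖y‖ := by
    funext y
    rw [integrand_eq hn (emb n y), emb_norm (by omega) y]
  have hvol : 0 < (volume (ball (0 : EuclideanSpace ℝ (Fin (n-1))) 1)).toReal := by
    apply ENNReal.toReal_pos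
    · exact (measure_ball_pos volume 0 one_pos).ne'
    · exact measure_ball_lt_top.ne
  constructor
  · rw [key1, MeasureTheory.integral_fun_norm_addHaar volume F₁,
      finrank_euclideanSpace_fin]
    have hrad : 0 < ∫ r in Ioi (0:ℝ), r ^ (n - 1 - 1) • F₁ r := by
      have hcongr : EqOn (fun r : ℝ => r ^ (n - 1 - 1) • F₁ r)
          (fun r : ℝ => c * (r^((n:ℝ)-2) * ((r^2:ℝ) * ((r^2-1) * (1+r^2)^(-(n:ℝ))))))
          (Ioi (0:ℝ)) := by
        intro r hr
        show r ^ (n - 1 - 1) • F₁ r = _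
        rw [hF₁, smul_eq_mul, ← Real.rpow_natCast r (n - 1 - 1), hcast]
        ring
      rw [setIntegral_congr_fun measurableSet_Ioi hcongr, integral_const_mul]
      exact mul_pos hcpos (radPos hν)
    have hd : 0 < n - 1 := by omega
    positivity
  · rw [key2, MeasureTheory.integral_fun_norm_addHaar volume F₂,
      finrank_euclideanSpace_fin]
    have hrad : ∫ r in Ioi (0:ℝ), r ^ (n - 1 - 1) • F₂ r = 0 := by
      have hcongr : EqOn (fun r : ℝ => r ^ (n - 1 - 1) • F₂ r)
          (fun r : ℝ => c * (r^((n:ℝ)-2) * ((r^2-1) * (1+r^2)^(-(n:ℝ)))))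
          (Ioi (0:ℝ)) := by
        intro r hr
        show r ^ (n - 1 - 1) • F₂ r = _
        rw [hF₂, smul_eq_mul, ← Real.rpow_natCast r (n - 1 - 1), hcast]
        ring
      rw [setIntegral_congr_fun measurableSet_Ioi hcongr, integral_const_mul,
        radZero hν, mul_zero]
    rw [hrad, smul_zero, smul_zero]
end LinNi
end
end
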